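/- arXiv:2601.04475 — 5 statements merged into one kernel-verified Lean document; each statement's English description precedes it below -/
import Mathlib

section
/- Let (X,d) be a compact metric space, T : X → X a continuous map, ε > 0, N ≥ 1 a natural number, and D ⊆ X × ℕ a collection of orbit segments (each (x,n) ∈ D has n ≥ 1). Suppose that for every (x,n) ∈ D the image T^N(T^{n−1}(B_n(x,ε))) equals X. Then D has the specification property at scale ε with transition time N − 1: for every finite list (x_1,n_1), …, (x_k,n_k) of elements of D there exists y ∈ X such that for each 1 ≤ i ≤ k, T^{t_i} y ∈ B_{n_i}(x_i, ε), where t_i = Σ_{j=1}^{i−1} (n_j + N − 1). -/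
/-- If for every orbit segment `(x,n)` in the collection `D` the set
`T^N(T^{n-1}(B_n(x,ε)))` is all of `X`, then `D` has specification at scale `ε`
with transition time `N - 1`. -/
theorem stmt_0 {X : Type*} [MetricSpace X] [CompactSpace X]
    (T : X → X) (hT : Continuous T) (ε : ℝ) (hε : 0 < ε) (N : ℕ) (hN : 1 ≤ N)
    (D : Set (X × ℕ)) (hD1 : ∀ p ∈ D, 1 ≤ p.2)
    (hD : ∀ p ∈ D,
      T^[N] '' (T^[p.2 - 1] '' {y : X | ∀ k < p.2, dist (T^[k] p.1) (T^[k] y) < ε})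
        = Set.univ) :
    ∀ (k : ℕ) (x : ℕ → X) (n : ℕ → ℕ), (∀ i < k, (x i, n i) ∈ D) →
      ∃ y : X, ∀ i < k,
        T^[∑ j ∈ Finset.range i, (n j + N - 1)] y ∈
          {z : X | ∀ m < n i, dist (T^[m] (x i)) (T^[m] z) < ε} := by
  intro k x n hmem
  set t : ℕ → ℕ := fun i => ∑ j ∈ Finset.range i, (n j + N - 1) with ht_def
  have ht_succ : ∀ a, t (a + 1) = t a + (n a + N - 1) := by
    intro a; simp [ht_def, Finset.sum_range_succ]
  have ht_mono : ∀ a b, a ≤ b → t a ≤ t b := by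
    intro a b hab
    exact Finset.sum_le_sum_of_subset (Finset.range_subset_range.mpr hab)
  have key : ∀ m, ∃ y : X, ∀ i, k - m ≤ i → i < k →
      T^[t i - t (k - m)] y ∈
        {z : X | ∀ mm < n i, dist (T^[mm] (x i)) (T^[mm] z) < ε} := by
    intro m
    induction m with
    | zero =>
      exact ⟨x 0, fun i h1 h2 => absurd (lt_of_le_of_lt h1 h2) (lt_irrefl _)⟩
    | succ m ih =>
      obtain ⟨y', hy'⟩ := ih
      by_cases hkm : k ≤ m
      · have : k - (m + 1) = k - m := by omega
        rw [this]; exact ⟨y', hy'⟩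
      · push_neg at hkm
        set j := k - (m + 1) with hj_def
        have hj1 : j + 1 = k - m := by omega
        have hjk : j < k := by omega
        have hmemj := hmem j hjk
        have hnj : 1 ≤ n j := hD1 _ hmemj
        have himg := hD _ hmemj
        simp only at himg
        have hy'mem : y' ∈ T^[N] ''
            (T^[n j - 1] '' {z : X | ∀ kk < n j, dist (T^[kk] (x j)) (T^[kk] z) < ε}) := by
          rw [himg]; trivial
        obtain ⟨w, ⟨z, hz, hwz⟩, hwy⟩ := hy'mem
        refine ⟨z, fun i hij hik => ?_⟩
        rcases eq_or_lt_of_le hij with h | h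
        · subst h
          simp only [Nat.sub_self, Function.iterate_zero, id_eq]
          exact hz
        · -- i ≥ j + 1
          have hzy' : T^[n j + N - 1] z = y' := by
            have : n j + N - 1 = N + (n j - 1) := by omega
            rw [this, Function.iterate_add_apply, hwz, hwy]
          have hti : t (j + 1) ≤ t i := ht_mono _ _ h
          have htj : t (j + 1) = t j + (n j + N - 1) := ht_succ j
          have harith : t i - t j = (t i - t (j + 1)) + (n j + N - 1) := by omega
          rw [harith, Function.iterate_add_apply, hzy']
          have := hy' i (by omega) hik
          rwa [hj1]
  obtain ⟨y, hy⟩ := key k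
  refine ⟨y, fun i hik => ?_⟩
  have := hy i (by omega) hik
  have ht0 : t (k - k) = 0 := by simp [ht_def, Nat.sub_self]
  rw [ht0, Nat.sub_zero] at this
  exact this
end

section
/- Let X be a set, f : X → X a map, λ : X → ℝ a nonnegative function, and η ≥ 0. Then every orbit segment decomposes into a good prefix and a bad suffix: for every x ∈ X and every n ∈ ℕ there exist g, s ∈ ℕ with g + s = n such that (a) for every k with 1 ≤ k ≤ g one has Σ_{i=g−k}^{g−1} λ(f^i x) ≥ ηk, and (b) if s ≥ 1 then Σ_{i=0}^{s−1} λ(f^{g+i} x) < ηs. -/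
/-- every orbit segment `(x,n)` decomposes into a good prefix
`(x,g)` (belonging to `G(η)`) and a bad suffix `(f^g x, s)` (belonging to
`B(η)`). -/
theorem stmt_2 {X : Type*} (f : X → X) (lam : X → ℝ) (hlam : ∀ x, 0 ≤ lam x)
    (η : ℝ) (hη : 0 ≤ η) :
    ∀ (x : X) (n : ℕ), ∃ g s : ℕ, g + s = n ∧
      (∀ k : ℕ, 1 ≤ k → k ≤ g →
        η * (k : ℝ) ≤ ∑ i ∈ Finset.Ico (g - k) g, lam (f^[i] x)) ∧
      (1 ≤ s → ∑ i ∈ Finset.range s, lam (f^[g + i] x) < η * (s : ℝ)) := by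
  intro x n
  classical
  set P : ℕ → Prop := fun m => ∀ k : ℕ, 1 ≤ k → k ≤ m →
      η * (k : ℝ) ≤ ∑ i ∈ Finset.Ico (m - k) m, lam (f^[i] x) with hPdef
  have hP0 : P 0 := by intro k hk hk0; omega
  set g := Nat.findGreatest P n with hg
  have hgn : g ≤ n := Nat.findGreatest_le n
  have hPg : P g := Nat.findGreatest_spec (Nat.zero_le n) hP0
  refine ⟨g, n - g, by omega, hPg, ?_⟩
  intro hs
  by_contra hcon
  push_neg at hcon
  set S : ℕ → ℝ := fun j => ∑ i ∈ Finset.range j, lam (f^[g + i] x) with hSdef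
  have hQ : ∃ t : ℕ, 1 ≤ t ∧ η * (t : ℝ) ≤ S t := ⟨n - g, hs, hcon⟩
  set t := Nat.find hQ with ht
  obtain ⟨ht1, htS⟩ := Nat.find_spec hQ
  have htmin : ∀ u, 1 ≤ u → u < t → S u < η * (u : ℝ) := by
    intro u hu1 hut
    have := Nat.find_min hQ hut
    push_neg at this
    exact this hu1
  have htn : t ≤ n - g := Nat.find_min' hQ ⟨hs, hcon⟩
  -- reindexing lemma
  have hshift : ∀ a b : ℕ, a ≤ b →
      ∑ i ∈ Finset.Ico (g + a) (g + b), lam (f^[i] x)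
        = ∑ i ∈ Finset.Ico a b, lam (f^[g + i] x) := by
    intro a b hab
    rw [Finset.sum_Ico_eq_sum_range, Finset.sum_Ico_eq_sum_range]
    have : g + b - (g + a) = b - a := by omega
    rw [this]
    apply Finset.sum_congr rfl
    intro i _
    rw [add_assoc]
  -- show P (g + t), contradicting maximality
  have hPgt : P (g + t) := by
    intro k hk1 hk2
    by_cases hkt : k ≤ t
    · have h1 : g + t - k = g + (t - k) := by omega
      rw [h1]
      have h2 : g + t = g + t := rfl
      rw [show (g + t) = g + t from rfl, hshift (t - k) t (by omega)]
      have hsub : ∑ i ∈ Finset.Ico (t - k) t, lam (f^[g + i] x) = S t - S (t - k) := by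
        rw [hSdef]
        simp only
        rw [Finset.sum_Ico_eq_sub _ (by omega : t - k ≤ t)]
      rw [hsub]
      by_cases hek : t - k = 0
      · have : t = k := by omega
        subst this
        rw [hek]
        simp only [hSdef]
        simp
        linarith [htS]
      · have h3 : S (t - k) < η * ((t - k : ℕ) : ℝ) := htmin _ (by omega) (by omega)
        have h4 : ((t - k : ℕ) : ℝ) = (t : ℝ) - (k : ℝ) := by
          rw [Nat.cast_sub hkt]
        rw [h4] at h3
        nlinarith [htS]
    · -- k > t
      push_neg at hkt
      have hj : k - t ≤ g := by omega
      have h1 : g + t - k = g - (k - t) := by omega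
      rw [h1]
      have hsplit : ∑ i ∈ Finset.Ico (g - (k - t)) (g + t), lam (f^[i] x)
          = ∑ i ∈ Finset.Ico (g - (k - t)) g, lam (f^[i] x)
            + ∑ i ∈ Finset.Ico g (g + t), lam (f^[i] x) := by
        rw [Finset.sum_Ico_consecutive _ (by omega) (by omega)]
      rw [hsplit]
      have h2 : ∑ i ∈ Finset.Ico g (g + t), lam (f^[i] x) = S t := by
        have := hshift 0 t (by omega)
        simp only [add_zero] at this
        rw [this, hSdef]
        simp only
        rw [Finset.range_eq_Ico]
      rw [h2]
      have h3 := hPg (k - t) (by omega) hj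
      have h4 : ((k - t : ℕ) : ℝ) = (k : ℝ) - (t : ℝ) := by
        have : t ≤ k := le_of_lt hkt
        push_cast [this]
        ring
      rw [h4] at h3
      nlinarith [htS]
  have hlt : g < g + t := by omega
  have hle : g + t ≤ n := by omega
  exact Nat.findGreatest_is_greatest hlt hle hPgt
end

section
/- Let (X,d) be a metric space, f : X → X a map, E ⊆ X, ε > 0 and r > 1. Assume: (i) d(f x, f y) ≥ d(x,y) whenever d(x,y) < ε; (ii) d(f x, f y) ≥ r·d(x,y) whenever x ∈ E and d(x,y) < ε. Let n ≥ 1 and let x, y ∈ X satisfy d(f^j x, f^j y) < ε for all 0 ≤ j ≤ n−1. Then for every 0 ≤ ℓ ≤ n−1 one has d(f^ℓ x, f^ℓ y) ≤ r^{−N} · ε, where N is the cardinality of { j : ℓ ≤ j ≤ n−2, f^j x ∈ E }. -/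
/-- if `f` is distance-increasing at scale `ε` and uniformly
`r`-expanding at scale `ε` on `E`, and the orbits of `x` and `y` stay
`ε`-close for `n` steps, then `d(f^ℓ x, f^ℓ y) ≤ r^{-N} ε` where `N` counts
the visits of the orbit of `x` to `E` between times `ℓ` and `n-2`. -/
theorem stmt_3 {X : Type*} [MetricSpace X] (f : X → X) (E : Set X)
    (ε r : ℝ) (hε : 0 < ε) (hr : 1 < r)
    (h1 : ∀ x y : X, dist x y < ε → dist x y ≤ dist (f x) (f y))
    (h2 : ∀ x y : X, x ∈ E → dist x y < ε → r * dist x y ≤ dist (f x) (f y))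
    (n : ℕ) (hn : 1 ≤ n) (x y : X)
    (hxy : ∀ j < n, dist (f^[j] x) (f^[j] y) < ε) :
    ∀ ℓ < n, dist (f^[ℓ] x) (f^[ℓ] y) ≤
      r ^ (-(({j : ℕ | ℓ ≤ j ∧ j + 2 ≤ n ∧ f^[j] x ∈ E}.ncard : ℝ))) * ε := by
  have hr0 : (0:ℝ) < r := lt_trans one_pos hr
  set S : ℕ → Set ℕ := fun ℓ => {j : ℕ | ℓ ≤ j ∧ j + 2 ≤ n ∧ f^[j] x ∈ E} with hS
  have hfin : ∀ ℓ, (S ℓ).Finite := by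
    intro ℓ
    apply (Set.finite_Iio n).subset
    rintro j ⟨-, h2, -⟩
    exact Set.mem_Iio.2 (by omega)
  have key : ∀ m : ℕ, ∀ ℓ, ℓ < n → n - ℓ = m →
      r ^ (S ℓ).ncard * dist (f^[ℓ] x) (f^[ℓ] y) ≤ ε := by
    intro m
    induction m with
    | zero => intro ℓ hℓ hm; omega
    | succ m ih =>
      intro ℓ hℓ hm
      by_cases hlast : ℓ + 1 = n
      · have hempty : S ℓ = ∅ := by
          apply Set.eq_empty_iff_forall_notMem.2
          rintro j ⟨hj1, hj2, -⟩
          omega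
        rw [hempty, Set.ncard_empty, pow_zero, one_mul]
        exact (hxy ℓ hℓ).le
      · have hℓ1 : ℓ + 1 < n := by omega
        have ih' := ih (ℓ+1) hℓ1 (by omega)
        have hstep : dist (f^[ℓ+1] x) (f^[ℓ+1] y)
            = dist (f (f^[ℓ] x)) (f (f^[ℓ] y)) := by
          simp [Function.iterate_succ_apply']
        by_cases hE : f^[ℓ] x ∈ E
        · have hset : S ℓ = insert ℓ (S (ℓ+1)) := by
            ext j
            simp only [hS, Set.mem_setOf_eq, Set.mem_insert_iff]
            constructor
            · rintro ⟨hj1, hj2, hj3⟩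
              rcases eq_or_lt_of_le hj1 with h | h
              · left; exact h.symm
              · right; exact ⟨by omega, hj2, hj3⟩
            · rintro (rfl | ⟨hj1, hj2, hj3⟩)
              · exact ⟨le_refl _, by omega, hE⟩
              · exact ⟨by omega, hj2, hj3⟩
          have hnotmem : ℓ ∉ S (ℓ+1) := fun h => by
            have := h.1; omega
          rw [hset, Set.ncard_insert_of_notMem hnotmem (hfin _), pow_succ]
          have h2' := h2 _ _ hE (hxy ℓ hℓ)
          calc r ^ (S (ℓ+1)).ncard * r * dist (f^[ℓ] x) (f^[ℓ] y)
              = r ^ (S (ℓ+1)).ncard * (r * dist (f^[ℓ] x) (f^[ℓ] y)) := by ring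
            _ ≤ r ^ (S (ℓ+1)).ncard * dist (f^[ℓ+1] x) (f^[ℓ+1] y) := by
                apply mul_le_mul_of_nonneg_left _ (pow_nonneg hr0.le _)
                rw [hstep]; exact h2'
            _ ≤ ε := ih'
        · have hset : S ℓ = S (ℓ+1) := by
            ext j
            simp only [hS, Set.mem_setOf_eq]
            constructor
            · rintro ⟨hj1, hj2, hj3⟩
              refine ⟨?_, hj2, hj3⟩
              rcases eq_or_lt_of_le hj1 with h | h
              · subst h; exact absurd hj3 hE
              · omega
            · rintro ⟨hj1, hj2, hj3⟩; exact ⟨by omega, hj2, hj3⟩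
          rw [hset]
          have h1' := h1 _ _ (hxy ℓ hℓ)
          calc r ^ (S (ℓ+1)).ncard * dist (f^[ℓ] x) (f^[ℓ] y)
              ≤ r ^ (S (ℓ+1)).ncard * dist (f^[ℓ+1] x) (f^[ℓ+1] y) := by
                apply mul_le_mul_of_nonneg_left _ (pow_nonneg hr0.le _)
                rw [hstep]; exact h1'
            _ ≤ ε := ih'
  intro ℓ hℓ
  have hkey := key (n - ℓ) ℓ hℓ rfl
  have hrw : r ^ (-(((S ℓ).ncard : ℕ) : ℝ)) * ε = ε / r ^ (S ℓ).ncard := by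
    rw [Real.rpow_neg hr0.le, Real.rpow_natCast, div_eq_inv_mul]
  rw [hrw, le_div_iff₀ (pow_pos hr0 _)]
  calc dist (f^[ℓ] x) (f^[ℓ] y) * r ^ (S ℓ).ncard
      = r ^ (S ℓ).ncard * dist (f^[ℓ] x) (f^[ℓ] y) := mul_comm _ _
    _ ≤ ε := hkey
end

section
/- Let (X,d) be a metric space, f : X → X a map, E ⊆ X, ε > 0 and r > 1. Assume: (i) d(f x, f y) ≥ d(x,y) whenever d(x,y) < ε; (ii) d(f x, f y) ≥ r·d(x,y) whenever x ∈ E and d(x,y) < ε. Let η ∈ (0,1] and let (x,n) with n ≥ 1 be an η-good orbit segment with respect to E. Then for every y ∈ X with d(f^j x, f^j y) < ε for all 0 ≤ j ≤ n−1, and every 0 ≤ ℓ ≤ n−1, one has d(f^ℓ x, f^ℓ y) ≤ r^{1−η(n−ℓ)} · ε. -/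
/-- if `(x,n)` is an `η`-good orbit segment with respect to `E`
and `y` stays `ε`-close to the orbit of `x` for `n` steps, then
`d(f^ℓ x, f^ℓ y) ≤ r^{1-η(n-ℓ)} ε` for all `0 ≤ ℓ ≤ n-1`. -/
theorem stmt_4 {X : Type*} [MetricSpace X] (f : X → X) (E : Set X)
    (ε r : ℝ) (hε : 0 < ε) (hr : 1 < r)
    (h1 : ∀ x y : X, dist x y < ε → dist x y ≤ dist (f x) (f y))
    (h2 : ∀ x y : X, x ∈ E → dist x y < ε → r * dist x y ≤ dist (f x) (f y))
    (η : ℝ) (hη0 : 0 < η) (hη1 : η ≤ 1)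
    (x : X) (n : ℕ) (hn : 1 ≤ n)
    (hgood : ∀ k : ℕ, 1 ≤ k → k ≤ n →
      η * (k : ℝ) ≤ ({i : ℕ | n - k ≤ i ∧ i < n ∧ f^[i] x ∈ E}.ncard : ℝ)) :
    ∀ y : X, (∀ j < n, dist (f^[j] x) (f^[j] y) < ε) →
      ∀ ℓ < n, dist (f^[ℓ] x) (f^[ℓ] y) ≤ r ^ (1 - η * ((n : ℝ) - (ℓ : ℝ))) * ε := by
  intro y hy ℓ hℓ
  classical
  have hr0 : (0:ℝ) < r := by linarith
  set d : ℕ → ℝ := fun i => dist (f^[i] x) (f^[i] y) with hd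
  have hdnn : ∀ i, 0 ≤ d i := fun i => dist_nonneg
  have step : ∀ j, j < n → d j ≤ d (j+1) := by
    intro j hj
    have := h1 _ _ (hy j hj)
    simpa [d, Function.iterate_succ_apply'] using this
  have stepE : ∀ j, j < n → f^[j] x ∈ E → r * d j ≤ d (j+1) := by
    intro j hj hE
    have := h2 _ _ hE (hy j hj)
    simpa [d, Function.iterate_succ_apply'] using this
  set c : ℕ → ℕ := fun j => ((Finset.Ico ℓ j).filter (fun i => f^[i] x ∈ E)).card with hc
  have key : ∀ j, ℓ ≤ j → j ≤ n → r ^ (c j) * d ℓ ≤ d j := by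
    intro j
    induction j with
    | zero =>
      intro h1' _
      have : ℓ = 0 := Nat.le_zero.mp h1'
      simp [c, this]
    | succ j ih =>
      intro hlj hjn
      rcases eq_or_lt_of_le hlj with h | h
      · rw [← h]
        simp [c]
      · have hlj' : ℓ ≤ j := Nat.lt_succ_iff.mp h
        have hjn' : j < n := lt_of_lt_of_le (Nat.lt_succ_self j) hjn
        have ihj := ih hlj' (le_of_lt hjn')
        have hins : Finset.Ico ℓ (j+1) = insert j (Finset.Ico ℓ j) :=
          Nat.Ico_succ_right_eq_insert_Ico hlj'
        by_cases hE : f^[j] x ∈ E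
        · have hcs : c (j+1) = c j + 1 := by
            simp only [c, hins, Finset.filter_insert, hE, if_pos]
            rw [Finset.card_insert_of_notMem (by simp)]
          rw [hcs]
          calc r ^ (c j + 1) * d ℓ = r * (r ^ (c j) * d ℓ) := by ring
            _ ≤ r * d j := by
                apply mul_le_mul_of_nonneg_left ihj (le_of_lt hr0)
            _ ≤ d (j+1) := stepE j hjn' hE
        · have hcs : c (j+1) = c j := by
            simp only [c, hins, Finset.filter_insert, hE, if_neg, not_false_iff]
          rw [hcs]
          exact le_trans ihj (step j hjn')
  -- apply hgood with k = n - ℓ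
  have hk1 : 1 ≤ n - ℓ := by omega
  have hk2 : n - ℓ ≤ n := Nat.sub_le n ℓ
  have hset : {i : ℕ | n - (n - ℓ) ≤ i ∧ i < n ∧ f^[i] x ∈ E}
      = ↑((Finset.Ico ℓ n).filter (fun i => f^[i] x ∈ E)) := by
    ext i
    simp only [Set.mem_setOf_eq, Finset.coe_filter, Finset.mem_Ico,
      Nat.sub_sub_self (le_of_lt hℓ)]
    tauto
  have hgood' : η * ((n:ℝ) - (ℓ:ℝ)) ≤ (c n : ℝ) := by
    have := hgood (n - ℓ) hk1 hk2
    rw [hset, Set.ncard_coe_finset] at this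
    have hcast : ((n - ℓ : ℕ) : ℝ) = (n:ℝ) - (ℓ:ℝ) := by
      rw [Nat.cast_sub (le_of_lt hℓ)]
    rw [hcast] at this
    exact this
  have hcn : c n ≤ c (n-1) + 1 := by
    have hnn : n = (n-1) + 1 := by omega
    have hlj' : ℓ ≤ n - 1 := by omega
    have hins : Finset.Ico ℓ n = insert (n-1) (Finset.Ico ℓ (n-1)) := by
      rw [hnn]; exact Nat.Ico_succ_right_eq_insert_Ico hlj'
    simp only [c, hins, Finset.filter_insert]
    split
    · exact Finset.card_insert_le _ _
    · omega
  have hkey := key (n-1) (by omega) (Nat.sub_le n 1)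
  have hdn1 : d (n-1) < ε := hy (n-1) (by omega)
  -- now the real arithmetic
  set c1 : ℝ := (c (n-1) : ℝ) with hc1
  have hexp : η * ((n:ℝ) - (ℓ:ℝ)) - 1 ≤ c1 := by
    have : (c n : ℝ) ≤ c1 + 1 := by
      rw [hc1]; exact_mod_cast hcn
    linarith
  have hrp : r ^ (c (n-1)) = r ^ c1 := by
    rw [hc1, Real.rpow_natCast]
  have h5 : r ^ c1 * d ℓ < ε := by
    rw [← hrp]
    exact lt_of_le_of_lt hkey hdn1
  have hrc1 : (0:ℝ) < r ^ c1 := Real.rpow_pos_of_pos hr0 _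
  have h6 : d ℓ < ε / r ^ c1 := by
    rw [lt_div_iff₀ hrc1]
    calc d ℓ * r ^ c1 = r ^ c1 * d ℓ := by ring
      _ < ε := h5
  have h7 : ε / r ^ c1 = r ^ (-c1) * ε := by
    rw [Real.rpow_neg (le_of_lt hr0)]
    field_simp
  have h8 : r ^ (-c1) ≤ r ^ (1 - η * ((n:ℝ) - (ℓ:ℝ))) := by
    apply Real.rpow_le_rpow_left_iff (x := r) hr |>.mpr
    linarith
  have hfin : d ℓ < r ^ (1 - η * ((n:ℝ) - (ℓ:ℝ))) * ε := by
    calc d ℓ < ε / r ^ c1 := h6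
      _ = r ^ (-c1) * ε := h7
      _ ≤ r ^ (1 - η * ((n:ℝ) - (ℓ:ℝ))) * ε :=
          mul_le_mul_of_nonneg_right h8 (le_of_lt hε)
  exact le_of_lt hfin
end

section
/- Let (X,d) be a metric space, f : X → X a map, E ⊆ X, ε > 0 and r > 1 with: (i) d(f x, f y) ≥ d(x,y) whenever d(x,y) < ε; (ii) d(f x, f y) ≥ r·d(x,y) whenever x ∈ E and d(x,y) < ε. Let η ∈ (0,1] and let φ : X → ℝ be θ-Hölder with constant K (θ > 0, K ≥ 0). Then φ has the Bowen property at scale ε on the collection of η-good orbit segments: there exists V ≥ 0 (one may take V = K (rε)^θ / (r^{ηθ} − 1)) such that for every η-good orbit segment (x,n) with n ≥ 1 and every y ∈ X with d(f^j x, f^j y) < ε for all 0 ≤ j ≤ n−1, one has |S_nφ(x) − S_nφ(y)| ≤ V. -/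
/-- under the expansion assumptions (i) and (ii), every Hölder
function `φ` has the Bowen property at scale `ε` on the collection of
`η`-good orbit segments with respect to `E`. -/
theorem stmt_6 {X : Type*} [MetricSpace X] (f : X → X) (E : Set X)
    (ε r : ℝ) (hε : 0 < ε) (hr : 1 < r)
    (h1 : ∀ x y : X, dist x y < ε → dist x y ≤ dist (f x) (f y))
    (h2 : ∀ x y : X, x ∈ E → dist x y < ε → r * dist x y ≤ dist (f x) (f y))
    (η : ℝ) (hη0 : 0 < η) (hη1 : η ≤ 1)
    (φ : X → ℝ) (θ K : ℝ) (hθ : 0 < θ) (hK : 0 ≤ K)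
    (hφ : ∀ a b : X, |φ a - φ b| ≤ K * dist a b ^ θ) :
    ∃ V : ℝ, 0 ≤ V ∧
      ∀ (x : X) (n : ℕ), 1 ≤ n →
        (∀ k : ℕ, 1 ≤ k → k ≤ n →
          η * (k : ℝ) ≤ ({i : ℕ | n - k ≤ i ∧ i < n ∧ f^[i] x ∈ E}.ncard : ℝ)) →
        ∀ y : X, (∀ j < n, dist (f^[j] x) (f^[j] y) < ε) →
          |(∑ k ∈ Finset.range n, φ (f^[k] x)) - ∑ k ∈ Finset.range n, φ (f^[k] y)|
            ≤ V := by
  classical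
  have hr0 : (0:ℝ) < r := lt_trans one_pos hr
  set q : ℝ := r ^ (-(η * θ)) with hqdef
  have hq0 : 0 < q := Real.rpow_pos_of_pos hr0 _
  have hq1 : q < 1 := Real.rpow_lt_one_of_one_lt_of_neg hr (by nlinarith)
  have h1q : 0 < 1 - q := by linarith
  have hrε : (0:ℝ) < r * ε := by positivity
  have hA : (0:ℝ) ≤ (r * ε) ^ θ := Real.rpow_nonneg hrε.le _
  refine ⟨K * (r * ε) ^ θ * (q / (1 - q)), by positivity, ?_⟩
  intro x n hn hgood y hclose
  -- chain expansion lemma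
  have chain : ∀ j l, j ≤ l → l < n →
      dist (f^[j] x) (f^[j] y) *
        r ^ (((Finset.Ico j l).filter (fun i => f^[i] x ∈ E)).card) ≤
      dist (f^[l] x) (f^[l] y) := by
    intro j l hjl hln
    induction l, hjl using Nat.le_induction with
    | base => simp
    | succ l hjl ih =>
      have hln' : l < n := Nat.lt_of_succ_lt hln
      have ih' := ih hln'
      have hd : dist (f^[l] x) (f^[l] y) < ε := hclose l hln'
      have hins : Finset.Ico j (l+1) = insert l (Finset.Ico j l) := by
        ext i; simp [Finset.mem_Ico]; omega
      rw [Function.iterate_succ_apply', Function.iterate_succ_apply']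
      by_cases hE : f^[l] x ∈ E
      · have hcard : ((Finset.Ico j (l+1)).filter (fun i => f^[i] x ∈ E)).card
            = ((Finset.Ico j l).filter (fun i => f^[i] x ∈ E)).card + 1 := by
          rw [hins, Finset.filter_insert, if_pos hE,
            Finset.card_insert_of_notMem (by simp)]
        rw [hcard, pow_succ]
        have h2' := h2 _ (f^[l] y) hE hd
        nlinarith [mul_le_mul_of_nonneg_right ih' hr0.le]
      · have hcard : ((Finset.Ico j (l+1)).filter (fun i => f^[i] x ∈ E)).card
            = ((Finset.Ico j l).filter (fun i => f^[i] x ∈ E)).card := by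
          rw [hins, Finset.filter_insert, if_neg hE]
        rw [hcard]
        exact ih'.trans (h1 _ _ hd)
  -- pointwise Hölder bound
  have hpow : ∀ j < n, dist (f^[j] x) (f^[j] y) ^ θ ≤ (r * ε) ^ θ * q ^ (n - j) := by
    intro j hj
    have hgd := hgood (n - j) (by omega) (by omega)
    have hnnj : n - (n - j) = j := by omega
    have hset : {i : ℕ | n - (n - j) ≤ i ∧ i < n ∧ f^[i] x ∈ E}
        = ↑((Finset.Ico j n).filter (fun i => f^[i] x ∈ E)) := by
      rw [hnnj]; ext i
      simp [Finset.mem_Ico, and_assoc]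
    rw [hset, Set.ncard_coe_finset] at hgd
    set c := ((Finset.Ico j n).filter (fun i => f^[i] x ∈ E)).card with hc
    have hjn1 : j ≤ n - 1 := by omega
    have hch := chain j (n-1) hjn1 (by omega)
    set c' := ((Finset.Ico j (n-1)).filter (fun i => f^[i] x ∈ E)).card with hc'
    have hcc : c ≤ c' + 1 := by
      have hins : Finset.Ico j n = insert (n-1) (Finset.Ico j (n-1)) := by
        ext i; simp [Finset.mem_Ico]; omega
      rw [hc, hins, Finset.filter_insert]
      split
      · exact Finset.card_insert_le _ _
      · omega
    have hdn : dist (f^[n-1] x) (f^[n-1] y) < ε := hclose _ (by omega)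
    have hd0 : (0:ℝ) ≤ dist (f^[j] x) (f^[j] y) := dist_nonneg
    have step1 : dist (f^[j] x) (f^[j] y) * r ^ c ≤ r * ε := by
      calc dist (f^[j] x) (f^[j] y) * r ^ c
          ≤ dist (f^[j] x) (f^[j] y) * r ^ (c' + 1) := by
            apply mul_le_mul_of_nonneg_left _ hd0
            exact pow_le_pow_right₀ hr.le hcc
        _ = r * (dist (f^[j] x) (f^[j] y) * r ^ c') := by ring
        _ ≤ r * dist (f^[n-1] x) (f^[n-1] y) := by
            exact mul_le_mul_of_nonneg_left hch hr0.le
        _ ≤ r * ε := mul_le_mul_of_nonneg_left hdn.le hr0.le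
    have hrc : (0:ℝ) < r ^ c := pow_pos hr0 _
    have step2 : dist (f^[j] x) (f^[j] y) ≤ (r * ε) * r ^ (-(η * ((n - j : ℕ) : ℝ))) := by
      have hd_le : dist (f^[j] x) (f^[j] y) ≤ (r * ε) * (r ^ c)⁻¹ := by
        rw [le_mul_inv_iff₀ hrc]; exact step1
      refine hd_le.trans ?_
      apply mul_le_mul_of_nonneg_left _ hrε.le
      have : (r ^ c)⁻¹ = r ^ (-(c : ℝ)) := by
        rw [← Real.rpow_natCast r c, ← Real.rpow_neg hr0.le]
      rw [this]
      exact Real.rpow_le_rpow_of_exponent_le hr.le (by nlinarith)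
    calc dist (f^[j] x) (f^[j] y) ^ θ
        ≤ ((r * ε) * r ^ (-(η * ((n - j : ℕ) : ℝ)))) ^ θ :=
          Real.rpow_le_rpow dist_nonneg step2 hθ.le
      _ = (r * ε) ^ θ * q ^ (n - j) := by
          rw [Real.mul_rpow hrε.le (Real.rpow_nonneg hr0.le _)]
          congr 1
          rw [← Real.rpow_natCast q (n - j), hqdef,
            ← Real.rpow_mul hr0.le, ← Real.rpow_mul hr0.le]
          ring_nf
  -- geometric sum bound
  have hgeom : ∑ j ∈ Finset.range n, q ^ j ≤ 1 / (1 - q) := by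
    rw [geom_sum_eq hq1.ne]
    have heq : (q ^ n - 1) / (q - 1) = (1 - q ^ n) / (1 - q) := by
      rw [div_eq_div_iff (by linarith) h1q.ne']; ring
    rw [heq]
    have : (0:ℝ) ≤ q ^ n := pow_nonneg hq0.le _
    rw [div_le_div_iff_of_pos_right h1q]
    linarith
  have hsum : ∑ k ∈ Finset.range n, q ^ (n - k) ≤ q / (1 - q) := by
    have hre : ∑ k ∈ Finset.range n, q ^ (n - k)
        = ∑ j ∈ Finset.range n, q ^ (j + 1) := by
      rw [← Finset.sum_range_reflect (fun j => q ^ (j + 1)) n]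
      refine Finset.sum_congr rfl fun j hj => ?_
      simp only [Finset.mem_range] at hj
      congr 1
      omega
    rw [hre]
    have : ∑ j ∈ Finset.range n, q ^ (j + 1) = (∑ j ∈ Finset.range n, q ^ j) * q := by
      rw [Finset.sum_mul]
      exact Finset.sum_congr rfl fun j _ => (pow_succ q j).symm
    rw [this, div_eq_mul_inv q, mul_comm q]
    calc (∑ j ∈ Finset.range n, q ^ j) * q ≤ (1 / (1 - q)) * q :=
          mul_le_mul_of_nonneg_right hgeom hq0.le
      _ = (1 - q)⁻¹ * q := by rw [one_div]
  -- put it together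
  calc |(∑ k ∈ Finset.range n, φ (f^[k] x)) - ∑ k ∈ Finset.range n, φ (f^[k] y)|
      = |∑ k ∈ Finset.range n, (φ (f^[k] x) - φ (f^[k] y))| := by
        rw [Finset.sum_sub_distrib]
    _ ≤ ∑ k ∈ Finset.range n, |φ (f^[k] x) - φ (f^[k] y)| :=
        Finset.abs_sum_le_sum_abs _ _
    _ ≤ ∑ k ∈ Finset.range n, K * ((r * ε) ^ θ * q ^ (n - k)) := by
        refine Finset.sum_le_sum fun k hk => (hφ _ _).trans ?_
        exact mul_le_mul_of_nonneg_left (hpow k (Finset.mem_range.mp hk)) hK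
    _ = K * (r * ε) ^ θ * ∑ k ∈ Finset.range n, q ^ (n - k) := by
        rw [Finset.mul_sum]
        exact Finset.sum_congr rfl fun k _ => by ring
    _ ≤ K * (r * ε) ^ θ * (q / (1 - q)) := by
        apply mul_le_mul_of_nonneg_left hsum (by positivity)
end
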